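/- arXiv:0809.1264 — 3 statements merged into one kernel-verified Lean document; each statement's English description precedes it below -/
import Mathlib

section
/- If p is a source with 1/2 ≤ p(1) < 2/3, then 1 + lg p(1) ≤ R*_opt(p) < 2 + lg(1 − p(1)). -/
/-- A source: a positive, monotonically nonincreasing probability mass function on `Fin n`. -/
def IsSource (n : ℕ) (p : Fin n → ℝ) : Prop :=
  (∀ i, 0 < p i) ∧ (∑ i, p i = 1) ∧ (∀ i j : Fin n, i ≤ j → p j ≤ p i)

/-- A codeword-length vector: positive integer lengths satisfying the Kraft inequality. -/
def IsCLV (n : ℕ) (l : Fin n → ℤ) : Prop :=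
  (∀ i, 1 ≤ l i) ∧ (∑ i, (2:ℝ) ^ (-(l i)) ≤ 1)

/-- Maximum pointwise redundancy `R*(l,p) = max_i (l(i) + lg p(i))`. -/
noncomputable def Rstar (n : ℕ) (l : Fin n → ℤ) (p : Fin n → ℝ) : ℝ :=
  ⨆ i : Fin n, ((l i : ℝ) + Real.logb 2 (p i))

/-- Minimum maximum pointwise redundancy over all codeword-length vectors. -/
noncomputable def RstarOpt (n : ℕ) (p : Fin n → ℝ) : ℝ :=
  sInf {r : ℝ | ∃ l : Fin n → ℤ, IsCLV n l ∧ Rstar n l p = r}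

/-!
The lower bound holds for every codeword-length vector, since `l(1) ≥ 1`. For the upper bound,
put `q = 1 - p(1)` and give symbol `1` length `1` and every other symbol `i` the length
`1 + ⌈lg (q / p(i))⌉`: the other symbols then use at most half of the Kraft budget, because
their probabilities sum to `q`. Their redundancies are all below `2 + lg q`, and that of
symbol `1` is `1 + lg p(1) < 2 + lg q` exactly when `p(1) < 2/3`.
-/

open Real

section Redundancy

variable {n : ℕ}

theorem exists_isCLV (n : ℕ) : ∃ l : Fin n → ℤ, IsCLV n l := by
  refine ⟨fun _ => n, fun i => Nat.one_le_cast.mpr i.pos, ?_⟩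
  have hlt : (n : ℝ) < 2 ^ n := by exact_mod_cast Nat.lt_two_pow_self
  simp only [Finset.sum_const, Finset.card_univ, Fintype.card_fin, nsmul_eq_mul, zpow_neg,
    zpow_natCast]
  rw [mul_inv_le_iff₀ (by positivity)]
  linarith

theorem le_Rstar (l : Fin n → ℤ) (p : Fin n → ℝ) (i : Fin n) :
    l i + logb 2 (p i) ≤ Rstar n l p :=
  le_ciSup (f := fun i => (l i : ℝ) + logb 2 (p i)) (Set.finite_range _).bddAbove i

theorem Rstar_lt_of_forall_lt [Nonempty (Fin n)] {l : Fin n → ℤ} {p : Fin n → ℝ} {c : ℝ}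
    (h : ∀ i, l i + logb 2 (p i) < c) : Rstar n l p < c := by
  obtain ⟨i, hi⟩ := Finite.exists_max fun i => (l i : ℝ) + logb 2 (p i)
  exact (ciSup_le hi).trans_lt (h i)

theorem one_add_logb_le_Rstar {l : Fin n → ℤ} (hl : IsCLV n l) (p : Fin n → ℝ) (i : Fin n) :
    1 + logb 2 (p i) ≤ Rstar n l p := by
  have := le_Rstar l p i
  have : (1 : ℝ) ≤ l i := by exact_mod_cast hl.1 i
  linarith

theorem one_add_logb_le_RstarOpt (p : Fin n → ℝ) (i : Fin n) :
    1 + logb 2 (p i) ≤ RstarOpt n p := by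
  obtain ⟨l, hl⟩ := exists_isCLV n
  refine le_csInf ⟨_, l, hl, rfl⟩ ?_
  rintro _ ⟨l, hl, rfl⟩
  exact one_add_logb_le_Rstar hl p i

theorem RstarOpt_le (p : Fin n → ℝ) {l : Fin n → ℤ} (hl : IsCLV n l) :
    RstarOpt n p ≤ Rstar n l p := by
  refine csInf_le ?_ ⟨l, hl, rfl⟩
  rcases isEmpty_or_nonempty (Fin n) with hn | ⟨⟨i⟩⟩
  · refine ⟨0, ?_⟩
    rintro _ ⟨l, -, rfl⟩
    simp [Rstar]
  · refine ⟨1 + logb 2 (p i), ?_⟩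
    rintro _ ⟨l, hl, rfl⟩
    exact one_add_logb_le_Rstar hl p i

end Redundancy

theorem two_zpow_neg_one_add_ceil_logb_le {x : ℝ} (hx : 0 < x) :
    (2 : ℝ) ^ (-(1 + ⌈logb 2 x⌉)) ≤ (2 * x)⁻¹ := by
  have hx_le : x ≤ (2 : ℝ) ^ ⌈logb 2 x⌉ := by
    calc x = (2 : ℝ) ^ logb 2 x := (rpow_logb two_pos (by norm_num) hx).symm
      _ ≤ (2 : ℝ) ^ (⌈logb 2 x⌉ : ℝ) := rpow_le_rpow_of_exponent_le one_le_two (Int.le_ceil _)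
      _ = (2 : ℝ) ^ ⌈logb 2 x⌉ := rpow_intCast 2 _
  rw [zpow_neg, zpow_add₀ two_ne_zero, zpow_one]
  gcongr

section SplitCode

variable {n : ℕ} {p : Fin n → ℝ}

noncomputable def splitCode (p : Fin n → ℝ) (z : Fin n) (i : Fin n) : ℤ :=
  if i = z then 1 else 1 + ⌈logb 2 ((1 - p z) / p i)⌉

theorem sum_erase_le_one_sub (hsum : ∑ i, p i ≤ 1) (z : Fin n) :
    ∑ i ∈ Finset.univ.erase z, p i ≤ 1 - p z := by
  linarith [Finset.add_sum_erase Finset.univ p (Finset.mem_univ z)]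

theorem le_one_sub_of_ne (hpos : ∀ i, 0 < p i) (hsum : ∑ i, p i ≤ 1) {z i : Fin n} (hi : i ≠ z) :
    p i ≤ 1 - p z :=
  (Finset.single_le_sum (fun j _ => (hpos j).le)
    (Finset.mem_erase.mpr ⟨hi, Finset.mem_univ i⟩)).trans (sum_erase_le_one_sub hsum z)

theorem isCLV_splitCode (hpos : ∀ i, 0 < p i) (hsum : ∑ i, p i ≤ 1) (z : Fin n) :
    IsCLV n (splitCode p z) := by
  have hratio : ∀ i ≠ z, 0 < (1 - p z) / p i := fun i hi =>
    div_pos ((hpos i).trans_le (le_one_sub_of_ne hpos hsum hi)) (hpos i)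
  have hterm : ∀ i ≠ z, (2 : ℝ) ^ (-splitCode p z i) ≤ p i / (2 * (1 - p z)) := fun i hi => by
    simpa [splitCode, hi, field] using two_zpow_neg_one_add_ceil_logb_le (hratio i hi)
  refine ⟨fun i => ?_, ?_⟩
  · by_cases hi : i = z
    · simp [splitCode, hi]
    · have : 0 ≤ ⌈logb 2 ((1 - p z) / p i)⌉ := Int.ceil_nonneg <| logb_nonneg one_lt_two <|
        (one_le_div (hpos i)).mpr (le_one_sub_of_ne hpos hsum hi)
      simp only [splitCode, hi, if_false]
      omega
  · have hq : 0 ≤ 1 - p z := (Finset.sum_nonneg fun i _ => (hpos i).le).trans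
      (sum_erase_le_one_sub hsum z)
    have htail : ∑ i ∈ Finset.univ.erase z, (2 : ℝ) ^ (-splitCode p z i) ≤ 1 / 2 :=
      calc ∑ i ∈ Finset.univ.erase z, (2 : ℝ) ^ (-splitCode p z i)
          ≤ ∑ i ∈ Finset.univ.erase z, p i / (2 * (1 - p z)) :=
            Finset.sum_le_sum fun i hi => hterm i (Finset.ne_of_mem_erase hi)
        _ = (∑ i ∈ Finset.univ.erase z, p i) / (2 * (1 - p z)) := (Finset.sum_div ..).symm
        _ ≤ 1 / 2 := div_le_of_le_mul₀ (by positivity) (by norm_num) (by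
            linarith [sum_erase_le_one_sub hsum z])
    have hz : (2 : ℝ) ^ (-splitCode p z z) = 1 / 2 := by norm_num [splitCode]
    show ∑ i, (2 : ℝ) ^ (-splitCode p z i) ≤ 1
    rw [← Finset.add_sum_erase _ _ (Finset.mem_univ z), hz]
    linarith

theorem Rstar_splitCode_lt (hpos : ∀ i, 0 < p i) {z : Fin n} (hz : p z < 2 / 3) :
    Rstar n (splitCode p z) p < 2 + logb 2 (1 - p z) := by
  have hq : 0 < 1 - p z := by linarith
  have : Nonempty (Fin n) := ⟨z⟩
  refine Rstar_lt_of_forall_lt fun i => ?_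
  by_cases hi : i = z
  · have hlog : logb 2 (p z) < logb 2 (2 * (1 - p z)) :=
      logb_lt_logb one_lt_two (hpos z) (by linarith)
    rw [logb_mul two_ne_zero hq.ne', logb_self_eq_one one_lt_two] at hlog
    simp only [splitCode, hi, if_true, Int.cast_one]
    linarith
  · have hceil := Int.ceil_lt_add_one (logb 2 ((1 - p z) / p i))
    simp only [splitCode, hi, if_false, Int.cast_add, Int.cast_one]
    linarith [logb_div hq.ne' (hpos i).ne' (b := 2)]

end SplitCode

theorem stmt3 (n : ℕ) (hn : 2 ≤ n) (p : Fin n → ℝ) (hp : IsSource n p)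
    (h2 : p ⟨0, by omega⟩ < 2/3) :
    1 + Real.logb 2 (p ⟨0, by omega⟩) ≤ RstarOpt n p ∧
      RstarOpt n p < 2 + Real.logb 2 (1 - p ⟨0, by omega⟩) := by
  obtain ⟨hpos, hsum, -⟩ := hp
  exact ⟨one_add_logb_le_RstarOpt p _,
    (RstarOpt_le p (isCLV_splitCode hpos hsum.le _)).trans_lt (Rstar_splitCode_lt hpos h2)⟩
end

section
/- Let λ ≥ 2 be an integer and let p be a source with 2/(2^λ + 1) ≤ p(1) < 2^{−(λ−1)}. Then R*_opt(p) ≤ λ + lg p(1). -/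
/-!
Anchor the code at the most likely symbol: take `l i = ⌊λ + lg (p 1 / p i)⌋`, so that `l 1 = λ` and
every `l i + lg p i` is at most `λ + lg p 1`. Rounding down loses at most one bit, so
`2^(-l i) ≤ 2^(1-λ) p i / p 1` for the other symbols, and the Kraft sum is at most
`2^(-λ) + 2^(1-λ) (1 - p 1) / p 1 = (2 - p 1) / (2^λ p 1)`, which is `≤ 1` exactly when
`p 1 ≥ 2 / (2^λ + 1)`.
-/

open Real Finset

theorem zpow_neg_floor_le_rpow_one_sub (x : ℝ) : (2 : ℝ) ^ (-⌊x⌋) ≤ 2 ^ (1 - x) := by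
  rw [← rpow_intCast]
  apply rpow_le_rpow_of_exponent_le one_le_two
  push_cast
  linarith [Int.sub_one_lt_floor x]

theorem sum_le_one_of_le_of_head_eq {ι : Type*} [Fintype ι] [DecidableEq ι] {f p : ι → ℝ}
    {i₀ : ι} {A : ℝ} (hA : 0 < A) (hp₀ : 0 < p i₀) (hsum : ∑ i, p i = 1)
    (hf₀ : f i₀ = 1 / A) (hf : ∀ i ≠ i₀, f i ≤ 2 * p i / (A * p i₀))
    (h : 2 ≤ p i₀ * (A + 1)) : ∑ i, f i ≤ 1 := by
  have hrest : ∑ i ∈ univ.erase i₀, p i = 1 - p i₀ := by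
    rw [← hsum, ← add_sum_erase _ _ (mem_univ i₀), add_sub_cancel_left]
  calc ∑ i, f i = f i₀ + ∑ i ∈ univ.erase i₀, f i := (add_sum_erase _ _ (mem_univ i₀)).symm
    _ ≤ 1 / A + ∑ i ∈ univ.erase i₀, 2 * p i / (A * p i₀) := by
        rw [hf₀]
        gcongr with i hi
        exact hf i (ne_of_mem_erase hi)
    _ = (2 - p i₀) / (A * p i₀) := by
        rw [← sum_div, ← mul_sum, hrest]
        field_simp
        ring
    _ ≤ 1 := by
        rw [div_le_one (by positivity)]
        linarith

section Lengths

variable {n : ℕ}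

theorem Rstar_le_of_forall [NeZero n] {l : Fin n → ℤ} {p : Fin n → ℝ} {c : ℝ}
    (h : ∀ i, (l i : ℝ) + logb 2 (p i) ≤ c) : Rstar n l p ≤ c :=
  ciSup_le h

theorem RstarOpt_le_Rstar [NeZero n] {l : Fin n → ℤ} (hl : IsCLV n l) (p : Fin n → ℝ) :
    RstarOpt n p ≤ Rstar n l p := by
  refine csInf_le ⟨1 + logb 2 (p 0), ?_⟩ ⟨l, hl, rfl⟩
  rintro _ ⟨l', hl', rfl⟩
  have hl'₀ : (1 : ℝ) ≤ l' 0 := by exact_mod_cast hl'.1 0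
  calc 1 + logb 2 (p 0) ≤ l' 0 + logb 2 (p 0) := by linarith
    _ ≤ Rstar n l' p :=
        le_ciSup (f := fun i => (l' i : ℝ) + logb 2 (p i)) (Set.finite_range _).bddAbove 0

/-- The lengths `⌊λ + lg (p i₀ / p i)⌋`, rounding the ideal lengths that give every symbol the
redundancy `λ + lg (p i₀)`. -/
noncomputable def anchoredLengths (lam : ℕ) (p : Fin n → ℝ) (i₀ : Fin n) : Fin n → ℤ :=
  fun i => ⌊(lam : ℝ) + logb 2 (p i₀ / p i)⌋

variable {lam : ℕ} {p : Fin n → ℝ} {i₀ : Fin n}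

theorem anchoredLengths_self (hp₀ : p i₀ ≠ 0) : anchoredLengths lam p i₀ i₀ = lam := by
  simp [anchoredLengths, div_self hp₀]

theorem le_anchoredLengths {i : Fin n} (hpi : 0 < p i) (hle : p i ≤ p i₀) :
    (lam : ℤ) ≤ anchoredLengths lam p i₀ i := by
  have : 0 ≤ logb 2 (p i₀ / p i) := logb_nonneg one_lt_two ((one_le_div hpi).2 hle)
  exact Int.le_floor.2 (by push_cast; linarith)

theorem anchoredLengths_add_logb_le {i : Fin n} (hp₀ : 0 < p i₀) (hpi : 0 < p i) :
    (anchoredLengths lam p i₀ i : ℝ) + logb 2 (p i) ≤ lam + logb 2 (p i₀) := by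
  simp only [anchoredLengths]
  rw [logb_div hp₀.ne' hpi.ne']
  linarith [Int.floor_le ((lam : ℝ) + (logb 2 (p i₀) - logb 2 (p i)))]

theorem zpow_neg_anchoredLengths_le {i : Fin n} (hp₀ : 0 < p i₀) (hpi : 0 < p i) :
    (2 : ℝ) ^ (-anchoredLengths lam p i₀ i) ≤ 2 * p i / (2 ^ lam * p i₀) := by
  refine (zpow_neg_floor_le_rpow_one_sub _).trans_eq ?_
  rw [sub_add_eq_sub_sub, rpow_sub two_pos, rpow_sub two_pos, rpow_one, rpow_natCast,
    rpow_logb two_pos (by norm_num) (div_pos hp₀ hpi)]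
  field_simp

theorem isCLV_anchoredLengths (hp : IsSource n p) (hi₀ : ∀ i, p i ≤ p i₀) (hlam : 1 ≤ lam)
    (h : 2 ≤ p i₀ * (2 ^ lam + 1)) : IsCLV n (anchoredLengths lam p i₀) := by
  obtain ⟨hpos, hsum, -⟩ := hp
  refine ⟨fun i => le_trans (by exact_mod_cast hlam) (le_anchoredLengths (hpos i) (hi₀ i)), ?_⟩
  refine sum_le_one_of_le_of_head_eq (by positivity) (hpos i₀) hsum ?_
    (fun i _ => zpow_neg_anchoredLengths_le (hpos i₀) (hpos i)) h
  rw [anchoredLengths_self (hpos i₀).ne', zpow_neg, zpow_natCast, one_div]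

end Lengths

theorem stmt7 (n : ℕ) (hn : 2 ≤ n) (lam : ℕ) (hlam : 2 ≤ lam)
    (p : Fin n → ℝ) (hp : IsSource n p)
    (h1 : 2 / ((2:ℝ) ^ lam + 1) ≤ p ⟨0, by omega⟩) :
    RstarOpt n p ≤ (lam:ℝ) + Real.logb 2 (p ⟨0, by omega⟩) := by
  have : NeZero n := ⟨by omega⟩
  set i₀ : Fin n := ⟨0, by omega⟩
  have hp₀ : 0 < p i₀ := hp.1 i₀
  have hi₀ : ∀ i, p i ≤ p i₀ := fun i => hp.2.2 i₀ i (Fin.zero_le i)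
  have hkraft : 2 ≤ p i₀ * (2 ^ lam + 1) := (div_le_iff₀ (by positivity)).1 h1
  calc RstarOpt n p
      ≤ Rstar n (anchoredLengths lam p i₀) p :=
        RstarOpt_le_Rstar (isCLV_anchoredLengths hp hi₀ (by omega) hkraft) p
    _ ≤ lam + logb 2 (p i₀) :=
        Rstar_le_of_forall fun i => anchoredLengths_add_logb_le hp₀ (hp.1 i)
end

section
/- Let λ ≥ 2 be an integer, let p₁ satisfy 2/(2^λ + 1) ≤ p₁ < 2^{−(λ−1)}, and let ε satisfy 0 < ε < 1 − p₁·2^{λ−1}. Define the source p on n = 2^λ symbols by p(1) = p₁, p(i) = (1 − p₁ − ε)/(2^λ − 2) for 2 ≤ i ≤ n−1, and p(n) = ε. Then p is a monotonically nonincreasing probability mass function and R*_opt(p) = λ + lg p₁. -/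
/-!
The uniform code of length `λ` satisfies Kraft with equality and has redundancy `λ + lg p₁`,
attained at the most likely symbol. Conversely, every probability except `p(n)` is at least
`p₁ / 2`, so a code with redundancy below `λ + lg p₁` would give the first symbol length at most
`λ - 1` and every other symbol except the last length at most `λ`. Its Kraft sum would then be
at least `2 · 2^{-λ} + (2^λ - 2) · 2^{-λ} = 1` before the positive contribution of the last
symbol, a contradiction.
-/

open Finset

theorem Finset.sum_eq_add_add_sum_erase_erase {ι M : Type*} [Fintype ι] [DecidableEq ι]
    [AddCommMonoid M] (f : ι → M) {i j : ι} (hij : i ≠ j) :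
    ∑ k, f k = f i + f j + ∑ k ∈ (univ.erase i).erase j, f k := by
  rw [← add_sum_erase univ f (mem_univ i),
    ← add_sum_erase _ f (mem_erase.2 ⟨hij.symm, mem_univ j⟩), add_assoc]

theorem cast_card_erase_erase_univ {ι : Type*} [Fintype ι] [DecidableEq ι] {i j : ι}
    (hij : i ≠ j) :
    (((univ.erase i).erase j).card : ℝ) = Fintype.card ι - 2 := by
  have hcard : 2 ≤ Fintype.card ι := Fintype.one_lt_card_iff.2 ⟨i, j, hij⟩
  rw [card_erase_of_mem (mem_erase.2 ⟨hij.symm, mem_univ j⟩), card_erase_of_mem (mem_univ i),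
    card_univ, Nat.sub_sub, Nat.cast_sub hcard]
  norm_num

theorem one_lt_kraft_sum {ι : Type*} [Fintype ι] {lam : ℕ} (hcard : 2 ^ lam ≤ Fintype.card ι)
    (l : ι → ℤ) {i₀ j : ι} (hij : i₀ ≠ j) (hi₀ : l i₀ < lam) (hle : ∀ i, i ≠ j → l i ≤ lam) :
    1 < ∑ i, (2:ℝ) ^ (-(l i)) := by
  classical
  set u : ℝ := (2:ℝ) ^ (-(lam : ℤ)) with hu
  have hone : 1 ≤ (Fintype.card ι : ℝ) * u := by
    rw [hu, zpow_neg, zpow_natCast, ← div_eq_mul_inv, one_le_div (by positivity)]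
    exact_mod_cast hcard
  have hfirst : 2 * u ≤ (2:ℝ) ^ (-(l i₀)) := by
    rw [← zpow_one_add₀ two_ne_zero]
    exact zpow_le_zpow_right₀ one_le_two (by omega)
  have hrest :
      ((Fintype.card ι : ℝ) - 2) * u ≤ ∑ i ∈ (univ.erase i₀).erase j, (2:ℝ) ^ (-(l i)) := by
    rw [← cast_card_erase_erase_univ hij, ← nsmul_eq_mul]
    refine card_nsmul_le_sum _ _ _ fun i hi => zpow_le_zpow_right₀ one_le_two ?_
    have := hle i (ne_of_mem_erase hi)
    omega
  have hlast : (0:ℝ) < (2:ℝ) ^ (-(l j)) := zpow_pos two_pos _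
  rw [sum_eq_add_add_sum_erase_erase _ hij]
  linarith

theorem length_lt_of_add_logb_lt {a m : ℤ} {k : ℕ} {x y : ℝ} (hx : 0 < x) (hy : 0 < y)
    (hyx : y ≤ 2 ^ k * x) (h : a + Real.logb 2 x < m + Real.logb 2 y) : a < m + k := by
  have hlog : Real.logb 2 y ≤ k + Real.logb 2 x := by
    calc Real.logb 2 y ≤ Real.logb 2 (2 ^ k * x) := Real.logb_le_logb_of_le one_lt_two hy hyx
      _ = k + Real.logb 2 x := by
        rw [Real.logb_mul (by positivity) hx.ne', Real.logb_pow, Real.logb_self_eq_one one_lt_two,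
          mul_one]
  exact_mod_cast (by linarith : (a : ℝ) < m + k)

theorem add_logb_le_Rstar {n : ℕ} (l : Fin n → ℤ) (p : Fin n → ℝ) (i : Fin n) :
    (l i : ℝ) + Real.logb 2 (p i) ≤ Rstar n l p :=
  le_ciSup (f := fun i => (l i : ℝ) + Real.logb 2 (p i)) (Set.finite_range _).bddAbove i

theorem Rstar_const {n : ℕ} (c : ℤ) {p : Fin n → ℝ} (hp : ∀ i, 0 < p i) {i₀ : Fin n}
    (hmax : ∀ i, p i ≤ p i₀) : Rstar n (fun _ => c) p = c + Real.logb 2 (p i₀) := by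
  have : Nonempty (Fin n) := ⟨i₀⟩
  refine le_antisymm (ciSup_le fun i => ?_) (add_logb_le_Rstar (fun _ => c) p i₀)
  gcongr
  exacts [one_lt_two, hp i, hmax i]

theorem isCLV_const {lam : ℕ} (hlam : 1 ≤ lam) : IsCLV (2 ^ lam) fun _ => (lam : ℤ) := by
  refine ⟨fun _ => show (1 : ℤ) ≤ lam by exact_mod_cast hlam, le_of_eq ?_⟩
  rw [sum_const, card_univ, Fintype.card_fin, nsmul_eq_mul, zpow_neg, zpow_natCast]
  push_cast
  exact mul_inv_cancel₀ (by positivity)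

theorem le_Rstar_of_le_two_mul {n lam : ℕ} (hn : 2 ^ lam ≤ n) {p : Fin n → ℝ}
    (hp : ∀ i, 0 < p i) {i₀ j : Fin n} (hij : i₀ ≠ j) (hhalf : ∀ i, i ≠ j → p i₀ ≤ 2 * p i)
    {l : Fin n → ℤ} (hkraft : ∑ i, (2:ℝ) ^ (-(l i)) ≤ 1) :
    lam + Real.logb 2 (p i₀) ≤ Rstar n l p := by
  by_contra! hlt
  have hterm (i : Fin n) : (l i : ℝ) + Real.logb 2 (p i) < (lam : ℤ) + Real.logb 2 (p i₀) := by
    exact_mod_cast (add_logb_le_Rstar l p i).trans_lt hlt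
  have hi₀ : l i₀ < lam := by
    simpa using length_lt_of_add_logb_lt (k := 0) (hp i₀) (hp i₀) (by simp) (hterm i₀)
  have hle (i : Fin n) (hi : i ≠ j) : l i ≤ lam := by
    have := length_lt_of_add_logb_lt (k := 1) (hp i) (hp i₀) (by simpa using hhalf i hi)
      (hterm i)
    push_cast at this
    omega
  exact hkraft.not_gt (one_lt_kraft_sum (by simpa using hn) l hij hi₀ hle)

theorem RstarOpt_eq {n : ℕ} {p : Fin n → ℝ} {r : ℝ} {l₀ : Fin n → ℤ} (hl₀ : IsCLV n l₀)
    (hr : Rstar n l₀ p = r) (hle : ∀ l, IsCLV n l → r ≤ Rstar n l p) : RstarOpt n p = r :=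
  IsLeast.csInf_eq ⟨⟨l₀, hl₀, hr⟩, fun _ ⟨l, hl, hlr⟩ => hlr ▸ hle l hl⟩

theorem isSource_of_three_levels {n : ℕ} (hn : 2 ≤ n) {a b c : ℝ} {p : Fin n → ℝ}
    (hc : 0 < c) (hcb : c ≤ b) (hba : b ≤ a) (hsum : a + c + (n - 2) * b = 1)
    (h0 : p ⟨0, by omega⟩ = a) (hmid : ∀ i : Fin n, 0 < i.val → i.val < n - 1 → p i = b)
    (hlast : p ⟨n - 1, by omega⟩ = c) : IsSource n p := by
  have hform (i : Fin n) : p i = if i.val = 0 then a else if i.val = n - 1 then c else b := by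
    split_ifs with hfirst hend
    · rw [← h0]; congr 1; ext; exact hfirst
    · rw [← hlast]; congr 1; ext; exact hend
    · exact hmid i (Nat.pos_of_ne_zero hfirst) (by omega)
  refine ⟨fun i => ?_, ?_, fun i j hij => ?_⟩
  · rw [hform i]; split_ifs <;> linarith
  · have hne : (⟨0, by omega⟩ : Fin n) ≠ ⟨n - 1, by omega⟩ := by
      simp only [ne_eq, Fin.mk.injEq]; omega
    rw [sum_eq_add_add_sum_erase_erase _ hne, h0, hlast, sum_congr rfl fun i hi => hmid i ?_ ?_,
      sum_const, nsmul_eq_mul, cast_card_erase_erase_univ hne, Fintype.card_fin]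
    · linarith
    all_goals
      have h₁ := ne_of_mem_erase hi
      have h₂ := ne_of_mem_erase (mem_of_mem_erase hi)
      simp only [ne_eq, Fin.ext_iff] at h₁ h₂
      omega
  · have : i.val ≤ j.val := hij
    rw [hform i, hform j]
    split_ifs <;> first | rfl | linarith | omega

theorem middle_level_bounds {X p₁ ε : ℝ} (hX : 4 ≤ X) (hlo : 2 ≤ p₁ * (X + 1))
    (hhi : p₁ * X < 2) (hε : 0 < ε) (hε' : ε < 1 - p₁ * (X / 2)) :
    ε ≤ (1 - p₁ - ε) / (X - 2) ∧ (1 - p₁ - ε) / (X - 2) ≤ p₁ ∧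
      p₁ < 2 * ((1 - p₁ - ε) / (X - 2)) := by
  have hX2 : 0 < X - 2 := by linarith
  refine ⟨?_, ?_, ?_⟩
  · rw [le_div_iff₀ hX2]
    nlinarith [mul_le_mul_of_nonneg_right hε'.le (by linarith : (0:ℝ) ≤ X - 1)]
  · rw [div_le_iff₀ hX2]
    nlinarith
  · rw [mul_div_assoc', lt_div_iff₀ hX2]
    nlinarith

theorem stmt11 (lam : ℕ) (hlam : 2 ≤ lam) (p₁ ε : ℝ)
    (hp1 : 2 / ((2:ℝ) ^ lam + 1) ≤ p₁) (hp1' : p₁ < (2:ℝ) ^ (-(lam:ℤ) + 1))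
    (hε : 0 < ε) (hε' : ε < 1 - p₁ * (2:ℝ) ^ ((lam:ℤ) - 1))
    (p : Fin (2 ^ lam) → ℝ)
    (h0 : p ⟨0, Nat.two_pow_pos lam⟩ = p₁)
    (hmid : ∀ i : Fin (2 ^ lam), 0 < i.val → i.val < 2 ^ lam - 1 →
      p i = (1 - p₁ - ε) / ((2:ℝ) ^ lam - 2))
    (hlast : p ⟨2 ^ lam - 1, by have := Nat.two_pow_pos lam; omega⟩ = ε) :
    IsSource (2 ^ lam) p ∧ RstarOpt (2 ^ lam) p = (lam:ℝ) + Real.logb 2 p₁ := by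
  have hn : 4 ≤ 2 ^ lam := (Nat.pow_le_pow_right two_pos hlam).trans' (by norm_num)
  have hX : (4:ℝ) ≤ 2 ^ lam := by exact_mod_cast hn
  rw [zpow_add₀ two_ne_zero, zpow_neg, zpow_natCast, zpow_one, ← div_eq_inv_mul,
    lt_div_iff₀ (by positivity)] at hp1'
  rw [zpow_sub₀ two_ne_zero, zpow_natCast, zpow_one] at hε'
  rw [div_le_iff₀ (by positivity)] at hp1
  obtain ⟨hεq, hqp, hpq⟩ := middle_level_bounds hX hp1 hp1' hε hε'
  have hsource : IsSource (2 ^ lam) p :=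
    isSource_of_three_levels (by omega) hε hεq hqp
      (by push_cast; rw [mul_div_cancel₀ _ (by linarith : (2:ℝ) ^ lam - 2 ≠ 0)]; ring)
      h0 hmid hlast
  have hmax (i : Fin (2 ^ lam)) : p i ≤ p ⟨0, Nat.two_pow_pos lam⟩ :=
    hsource.2.2 _ i (Fin.zero_le _)
  have hhalf (i : Fin (2 ^ lam)) (hi : i ≠ ⟨2 ^ lam - 1, by omega⟩) :
      p ⟨0, Nat.two_pow_pos lam⟩ ≤ 2 * p i := by
    by_cases hi₀ : i.val = 0
    · obtain rfl : i = ⟨0, Nat.two_pow_pos lam⟩ := Fin.ext hi₀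
      linarith [hsource.1 ⟨0, Nat.two_pow_pos lam⟩]
    · rw [h0, hmid i (Nat.pos_of_ne_zero hi₀) (by simp only [ne_eq, Fin.ext_iff] at hi; omega)]
      exact hpq.le
  rw [← h0]
  refine ⟨hsource, RstarOpt_eq (isCLV_const (by omega)) ?_ fun l hl => ?_⟩
  · rw [Rstar_const _ hsource.1 hmax, Int.cast_natCast]
  · exact le_Rstar_of_le_two_mul le_rfl hsource.1 (by simp only [ne_eq, Fin.mk.injEq]; omega)
      hhalf hl.2
end
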